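/- Let V be a finite type and let E be a set of permutations of V, each of which is a 3-cycle. Define a simple graph on V by joining u and v (u ≠ v) whenever some σ ∈ E has both u and v in its support. If this graph is connected, then the subgroup of Perm V generated by E equals the alternating group on V. -/

import Mathlib

open Function

/-- The shift map on `ℤ → A`. -/
def shiftMap (A : Type*) : (ℤ → A) → (ℤ → A) := fun x i => x (i + 1)

/-- The shift map as a permutation of `ℤ → A`. -/
def shiftPerm (A : Type*) : Equiv.Perm (ℤ → A) where
  toFun := shiftMap A
  invFun x i := x (i - 1)
  left_inv x := funext fun i => by simp [shiftMap]
  right_inv x := funext fun i => by simp [shiftMap]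

/-- Finite types carry the discrete topology. -/
instance fintypeDiscreteTopology (A : Type*) [Fintype A] : TopologicalSpace A := ⊥

/-- The automorphism group of the full shift `A^ℤ`: shift-commuting self-homeomorphisms of
`ℤ → A`, as a subgroup of the permutation group of `ℤ → A`. -/
def FullShiftAut (A : Type*) [Fintype A] : Subgroup (Equiv.Perm (ℤ → A)) where
  carrier := { f | Continuous ⇑f ∧ Continuous ⇑f.symm ∧
      ∀ x, f (shiftMap A x) = shiftMap A (f x) }
  one_mem' := ⟨continuous_id, continuous_id, fun _ => rfl⟩
  mul_mem' := by
    rintro f g ⟨hf1, hf2, hf3⟩ ⟨hg1, hg2, hg3⟩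
    refine ⟨?_, ?_, fun x => ?_⟩
    · exact hf1.comp hg1
    · exact hg2.comp hf2
    · show f (g (shiftMap A x)) = shiftMap A (f (g x))
      rw [hg3, hf3]
  inv_mem' := by
    rintro f ⟨hf1, hf2, hf3⟩
    refine ⟨hf2, hf1, fun x => ?_⟩
    apply f.injective
    rw [show ∀ y, f (f⁻¹ y) = y from fun y => f.apply_symm_apply y, hf3,
      show ∀ y, f (f⁻¹ y) = y from fun y => f.apply_symm_apply y]

/-- The symbol permutation determined by a permutation of the alphabet. -/
def symbolPerm {A : Type*} (π : Equiv.Perm A) : Equiv.Perm (ℤ → A) :=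
  Equiv.piCongrRight fun _ => π

/-- The partial shift on the first track. -/
def partialShift₁ (B C : Type*) : Equiv.Perm (ℤ → B × C) where
  toFun x i := ((x (i + 1)).1, (x i).2)
  invFun x i := ((x (i - 1)).1, (x i).2)
  left_inv x := funext fun i => by simp
  right_inv x := funext fun i => by simp

/-- The partial shift on the second track. -/
def partialShift₂ (B C : Type*) : Equiv.Perm (ℤ → B × C) where
  toFun x i := ((x i).1, (x (i + 1)).2)
  invFun x i := ((x i).1, (x (i - 1)).2)
  left_inv x := funext fun i => by simp
  right_inv x := funext fun i => by simp

/-- `PAut[B;C]`: the subgroup of the automorphism group of `(B × C)^ℤ` generated by the two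
partial shifts and all symbol permutations. -/
def PAut (B C : Type*) : Subgroup (Equiv.Perm (ℤ → B × C)) :=
  Subgroup.closure
    ({partialShift₁ B C, partialShift₂ B C} ∪ Set.range (symbolPerm (A := B × C)))

/-! A 3-cycle `σ` cannot move a set `B` with two points off itself, because `B` and `σ • B`
would then give four distinct points of a support of size three. Hence every block of `⟨E⟩`
with two points is `σ`-invariant for all `σ ∈ E`, and so, `σ` being a cycle, it contains the
whole support of `σ` as soon as it meets it. Along the connected support graph such a block
(and likewise every orbit) fills up `V`, so `⟨E⟩` is primitive, and Jordan's theorem (a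
primitive group containing a 3-cycle contains the alternating group) concludes. -/

open Equiv Equiv.Perm MulAction
open scoped Pointwise

theorem SimpleGraph.Preconnected.eq_univ_of_adj_mem {V : Type*} {G : SimpleGraph V}
    (hG : G.Preconnected) {S : Set V} (hS : S.Nonempty)
    (h : ∀ ⦃a b⦄, G.Adj a b → a ∈ S → b ∈ S) : S = Set.univ := by
  refine Set.eq_univ_of_forall fun v => by_contra fun hv => ?_
  obtain ⟨u, hu⟩ := hS
  obtain ⟨p⟩ := hG u v
  obtain ⟨d, -, hd, hd'⟩ := p.exists_boundary_dart S hu hv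
  exact hd' (h d.adj hd)

namespace Equiv.Perm

variable {V : Type*} [Fintype V] [DecidableEq V]

theorem IsCycle.mem_of_smul_set_eq {σ : Perm V} (hσ : σ.IsCycle) {B : Set V} (hB : σ • B = B)
    {a b : V} (ha : a ∈ σ.support) (hb : b ∈ σ.support) (haB : a ∈ B) : b ∈ B := by
  obtain ⟨k, rfl⟩ := hσ.exists_zpow_eq (mem_support.1 ha) (mem_support.1 hb)
  have hk : σ ^ k • B = B := by
    rw [← mem_stabilizer_iff] at hB ⊢
    exact zpow_mem hB k
  exact hk ▸ Set.smul_mem_smul_set haB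

theorem IsThreeCycle.smul_set_inter_nonempty {σ : Perm V} (hσ : σ.IsThreeCycle) {B : Set V}
    (hB : B.Nontrivial) : (σ • B ∩ B).Nonempty := by
  obtain ⟨x, hx, y, hy, hxy⟩ := hB
  by_contra h
  have hout : ∀ z ∈ B, σ z ∉ B := fun z hz hσz =>
    h ⟨σ z, Set.smul_mem_smul_set hz, hσz⟩
  have hxσx : σ x ≠ x := fun e => hout x hx (by rwa [e])
  have hyσy : σ y ≠ y := fun e => hout y hy (by rwa [e])
  have hsub : ({x, y, σ x, σ y} : Finset V) ⊆ σ.support := by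
    simp [Finset.insert_subset_iff, hxσx, hyσy]
  have hcard : ({x, y, σ x, σ y} : Finset V).card = 4 := by
    have hxσy : x ≠ σ y := fun e => hout y hy (e ▸ hx)
    have hyσx : y ≠ σ x := fun e => hout x hx (e ▸ hy)
    rw [Finset.card_insert_of_notMem, Finset.card_insert_of_notMem, Finset.card_pair]
    all_goals simp_all [eq_comm]
  have := Finset.card_le_card hsub
  rw [hσ.card_support, hcard] at this
  omega

end Equiv.Perm

section SupportGraph

variable {V : Type*} [Fintype V] [DecidableEq V]

def supportGraph (E : Set (Perm V)) : SimpleGraph V :=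
  SimpleGraph.fromRel fun u v => ∃ σ ∈ E, u ∈ σ.support ∧ v ∈ σ.support

variable {E : Set (Perm V)}

theorem eq_univ_of_forall_smul_eq (hE : ∀ σ ∈ E, σ.IsCycle)
    (hconn : (supportGraph E).Preconnected) {B : Set V} (hB : B.Nonempty)
    (hinv : ∀ σ ∈ E, σ • B = B) : B = Set.univ := by
  refine hconn.eq_univ_of_adj_mem hB fun a b hab ha => ?_
  obtain ⟨-, ⟨σ, hσ, ha', hb'⟩ | ⟨σ, hσ, hb', ha'⟩⟩ := hab <;>
    exact (hE σ hσ).mem_of_smul_set_eq (hinv σ hσ) ha' hb' ha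

theorem isPreprimitive_closure_of_isThreeCycle (hE : ∀ σ ∈ E, σ.IsThreeCycle)
    (hconn : (supportGraph E).Connected) : IsPreprimitive (Subgroup.closure E) V := by
  have hcyc : ∀ σ ∈ E, σ.IsCycle := fun σ hσ => (hE σ hσ).isCycle
  have : IsPretransitive (Subgroup.closure E) V := by
    obtain ⟨a⟩ := hconn.nonempty
    rw [isPretransitive_iff_orbit_eq_univ a]
    exact eq_univ_of_forall_smul_eq hcyc hconn.preconnected ⟨a, mem_orbit_self a⟩
      fun σ hσ => smul_orbit (⟨σ, Subgroup.subset_closure hσ⟩ : Subgroup.closure E) a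
  refine ⟨fun {B} hB => or_iff_not_imp_left.2 fun hB₂ => ?_⟩
  rw [Set.not_subsingleton_iff] at hB₂
  exact eq_univ_of_forall_smul_eq hcyc hconn.preconnected hB₂.nonempty fun σ hσ =>
    hB.smul_eq_of_nonempty (g := ⟨σ, Subgroup.subset_closure hσ⟩)
      ((hE σ hσ).smul_set_inter_nonempty hB₂)

end SupportGraph

/-- if the supports of a set `E` of 3-cycles form a weakly connected hypergraph
(i.e. the graph joining two distinct vertices lying in the support of a common element of `E`
is connected), then `E` generates the alternating group. -/
theorem stmt4 (V : Type) [Fintype V] [DecidableEq V]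
    (E : Set (Equiv.Perm V)) (hE : ∀ σ ∈ E, σ.IsThreeCycle)
    (hconn : (SimpleGraph.fromRel
        (fun u v => ∃ σ ∈ E, u ∈ σ.support ∧ v ∈ σ.support)).Connected) :
    Subgroup.closure E = alternatingGroup V := by
  refine le_antisymm ((Subgroup.closure_le _).2 fun σ hσ => (hE σ hσ).mem_alternatingGroup) ?_
  rcases E.eq_empty_or_nonempty with rfl | ⟨σ, hσ⟩
  · have : Subsingleton V := by
      refine (SimpleGraph.connected_bot_iff.1 ?_).1
      convert hconn
      ext
      simp
    exact le_of_eq (Subsingleton.elim _ _)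
  · exact alternatingGroup_le_of_isPreprimitive_of_isThreeCycle_mem
      (isPreprimitive_closure_of_isThreeCycle hE hconn) (hE σ hσ) (Subgroup.subset_closure hσ)
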